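/- There exists no real characteristic matrix on C^n(n+3)* for any n ≥ 6. -/

import Mathlib

/-!
Let `W` be the kernel of `M`, viewed as a subspace of `(ℤ/2)^(n+3)`. If `a < b < c` with `b - a`
and `c - b` odd, the complement of `{a, b, c}` is a Gale facet, so its minor is invertible and no
nonzero vector of `W` vanishes on `{a, b, c}`. By rank-nullity `dim W ≥ 3`, and restricting to such
a triple gives `dim W ≤ 3`. Any two of the first nine columns lie in a common such triple, and a
nonzero `w ∈ W` vanishing on the two other points of it separates them: the nine coordinate
functionals `w ↦ w t` on `W` (the Gale dual vectors) are pairwise distinct elements of the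
8-element space `W*`.
-/

/-- The Gale interval `I_j = {j, j+1} ∩ {1,…,m}`. -/
def galeInterval (m j : ℕ) : Finset ℕ := ({j, j + 1} : Finset ℕ) ∩ Finset.Icc 1 m

/-- `S` is a maximal simplex of `K_{Cⁿ(m)*}` (dual Gale evenness): an `n`-subset of
`{1,…,m}` which is a disjoint union of Gale intervals. -/
def IsGaleFacet (n m : ℕ) (S : Finset ℕ) : Prop :=
  S.card = n ∧ ∃ J : Finset ℕ, J ⊆ Finset.range (m + 1) ∧
    (∀ a ∈ J, ∀ b ∈ J, a ≠ b → Disjoint (galeInterval m a) (galeInterval m b)) ∧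
    S = J.biUnion (galeInterval m)

/-- `M` (an `n×m` matrix over `ℤ/2`, columns indexed 1-based by `ℕ`) is a real
characteristic matrix on `Cⁿ(m)*`: every `n×n` minor on a maximal simplex is nonzero. -/
def IsRealCharMat (n m : ℕ) (M : Fin n → ℕ → ZMod 2) : Prop :=
  ∀ cols : Fin n → ℕ, Function.Injective cols →
    IsGaleFacet n m (Finset.image cols Finset.univ) →
    Matrix.det (Matrix.of fun p q => M p (cols q)) ≠ 0

open Module Matrix

section Coordinates

variable {F ι : Type*} [Field F]

theorem Matrix.eq_zero_of_mulVec_eq_zero_of_det_submatrix_ne_zero [Fintype ι] {m : Type*}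
    [Fintype m] [DecidableEq m] {A : Matrix m ι F} {e : m → ι} (he : Function.Injective e)
    (hdet : (A.submatrix id e).det ≠ 0) {w : ι → F} (hw : A *ᵥ w = 0)
    (hwe : ∀ i ∉ Set.range e, w i = 0) : w = 0 := by
  have hsub : A.submatrix id e *ᵥ (w ∘ e) = 0 := by
    ext p
    rw [← congrFun hw p]
    exact Fintype.sum_of_injective e he _ _ (fun i hi => by simp [hwe i hi]) fun _ => rfl
  have hwe' := Matrix.eq_zero_of_mulVec_eq_zero hdet hsub
  ext i
  by_cases hi : i ∈ Set.range e
  · obtain ⟨q, rfl⟩ := hi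
    exact congrFun hwe' q
  · exact hwe i hi

theorem Matrix.card_le_card_add_finrank_ker [Fintype ι] {m : Type*} [Fintype m]
    (A : Matrix m ι F) :
    Fintype.card ι ≤ Fintype.card m + finrank F (LinearMap.ker A.mulVecLin) := by
  have hrange := (LinearMap.range A.mulVecLin).finrank_le
  have hnullity := A.mulVecLin.finrank_range_add_finrank_ker
  simp only [finrank_fintype_fun_eq_card] at hrange hnullity
  omega

variable (W : Submodule F (ι → F))

def Submodule.restrictCoords (T : Finset ι) : W →ₗ[F] (T → F) :=
  LinearMap.pi (fun t : T => LinearMap.proj (t : ι)) ∘ₗ W.subtype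

theorem Submodule.restrictCoords_injective {T : Finset ι}
    (hT : ∀ w ∈ W, (∀ t ∈ T, w t = 0) → w = 0) : Function.Injective (W.restrictCoords T) := by
  rw [← LinearMap.ker_eq_bot, LinearMap.ker_eq_bot']
  rintro ⟨w, hw⟩ h0
  exact Subtype.ext (hT w hw fun t ht => congrFun h0 ⟨t, ht⟩)

theorem Submodule.finrank_le_card_of_forall_eq_zero [Finite ι] {T : Finset ι}
    (hT : ∀ w ∈ W, (∀ t ∈ T, w t = 0) → w = 0) : finrank F W ≤ T.card := by
  simpa using LinearMap.finrank_le_finrank_of_injective (W.restrictCoords_injective hT)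

theorem Submodule.exists_apply_ne_apply [Finite ι] [DecidableEq ι] {T : Finset ι}
    (hcard : T.card ≤ finrank F W) (hT : ∀ w ∈ W, (∀ t ∈ T, w t = 0) → w = 0)
    {p q : ι} (hp : p ∈ T) (hq : q ∈ T) (hpq : p ≠ q) : ∃ w ∈ W, w p ≠ w q := by
  have hlt : finrank F (T.erase q → F) < finrank F W := by
    rw [finrank_fintype_fun_eq_card, Fintype.card_coe, Finset.card_erase_of_mem hq]
    have := Finset.card_pos.mpr ⟨p, hp⟩
    omega
  obtain ⟨⟨w, hwW⟩, hker, hw0⟩ :=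
    Submodule.exists_mem_ne_zero_of_ne_bot
      (LinearMap.ker_ne_bot_of_finrank_lt (f := W.restrictCoords (T.erase q)) hlt)
  rw [LinearMap.mem_ker] at hker
  refine ⟨w, hwW, fun hpq' => hw0 (Subtype.ext (hT w hwW fun t ht => ?_))⟩
  by_cases htq : t = q
  · rw [htq, ← hpq']
    exact congrFun hker ⟨p, Finset.mem_erase.mpr ⟨hpq, hp⟩⟩
  · exact congrFun hker ⟨t, Finset.mem_erase.mpr ⟨htq, ht⟩⟩

theorem Submodule.card_le_pow_finrank_of_separating [Finite ι] [Finite F] {κ : Type*} [Finite κ]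
    (f : κ → ι) (hsep : ∀ p q, p ≠ q → ∃ w ∈ W, w (f p) ≠ w (f q)) :
    Nat.card κ ≤ Nat.card F ^ finrank F W := by
  let ev : κ → Dual F W := fun p => LinearMap.proj (f p) ∘ₗ W.subtype
  have hev : Function.Injective ev := by
    intro p q hpq
    by_contra hne
    obtain ⟨w, hw, hne'⟩ := hsep p q hne
    exact hne' (LinearMap.congr_fun hpq ⟨w, hw⟩)
  have : Finite (Dual F W) := Module.finite_of_finite F (M := Dual F W)
  calc Nat.card κ ≤ Nat.card (Dual F W) := Nat.card_le_card_of_injective ev hev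
    _ = Nat.card F ^ finrank F W := by
      rw [Module.natCard_eq_pow_finrank (K := F), Subspace.dual_finrank_eq]

end Coordinates

def IsGaleTriple (a b c : ℕ) : Prop :=
  a < b ∧ b < c ∧ Odd (b - a) ∧ Odd (c - b)

theorem isGaleTriple_iff {a b c : ℕ} :
    IsGaleTriple a b c ↔ a < b ∧ b < c ∧ (b - a) % 2 = 1 ∧ (c - b) % 2 = 1 := by
  simp only [IsGaleTriple, Nat.odd_iff]

theorem exists_isGaleTriple_mem_of_lt {m k : ℕ} (hk : Odd k) (hkm : k ≤ m) {p q : Fin m}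
    (hpq : p < q) (hqk : (q : ℕ) < k) :
    ∃ a b c : Fin m, IsGaleTriple a b c ∧ p ∈ ({a, b, c} : Finset (Fin m)) ∧
      q ∈ ({a, b, c} : Finset (Fin m)) := by
  rw [Nat.odd_iff] at hk
  rw [Fin.lt_def] at hpq
  simp only [isGaleTriple_iff, Finset.mem_insert, Finset.mem_singleton, Fin.ext_iff]
  by_cases heven : ((q : ℕ) - p) % 2 = 0
  · exact ⟨p, ⟨p + 1, by omega⟩, q, by simp only [true_or, or_true, and_true]; omega⟩
  by_cases hlast : (q : ℕ) + 1 < k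
  · exact ⟨p, q, ⟨q + 1, by omega⟩, by simp only [true_or, or_true, and_true]; omega⟩
  · exact ⟨⟨p - 1, by omega⟩, p, q, by simp only [true_or, or_true, and_true]; omega⟩

theorem mem_galeInterval {m j x : ℕ} :
    x ∈ galeInterval m j ↔ (x = j ∨ x = j + 1) ∧ 1 ≤ x ∧ x ≤ m := by
  simp [galeInterval]

/-- The left endpoints of the Gale intervals tiling `[1, m] \ {a, b, c}`: below `a` they step down
from `a - 2` (possibly ending in `I₀ = {1}`), in each gap they step up from just after the removed
point (the last gap possibly ending in `Iₘ = {m}`). -/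
def galeTripleTiling (m a b c : ℕ) : Finset ℕ :=
  (Finset.range (m + 1)).filter fun j =>
    (j + 2 ≤ a ∧ j % 2 = a % 2) ∨ (a < j ∧ j + 2 ≤ b ∧ j % 2 = b % 2) ∨
      (b < j ∧ j + 2 ≤ c ∧ j % 2 = c % 2) ∨ (c < j ∧ j % 2 ≠ c % 2)

theorem mem_galeTripleTiling {m a b c j : ℕ} :
    j ∈ galeTripleTiling m a b c ↔ j ≤ m ∧ ((j + 2 ≤ a ∧ j % 2 = a % 2) ∨
      (a < j ∧ j + 2 ≤ b ∧ j % 2 = b % 2) ∨ (b < j ∧ j + 2 ≤ c ∧ j % 2 = c % 2) ∨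
      (c < j ∧ j % 2 ≠ c % 2)) := by
  simp only [galeTripleTiling, Finset.mem_filter, Finset.mem_range, Nat.lt_succ_iff]

theorem exists_mem_galeTripleTiling {m a b c x : ℕ} (habc : IsGaleTriple a b c)
    (hx1 : 1 ≤ x) (hxm : x ≤ m) (hxa : x ≠ a) (hxb : x ≠ b) (hxc : x ≠ c) :
    ∃ j ∈ galeTripleTiling m a b c, x = j ∨ x = j + 1 := by
  rw [isGaleTriple_iff] at habc
  simp only [mem_galeTripleTiling]
  -- `x` is a left endpoint iff it has the parity of the endpoints of its gap, else `x - 1` is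
  by_cases hpar : x % 2 = (if x < a then a else if x < b then b else if x < c then c else c + 1) % 2
  · refine ⟨x, ?_, Or.inl rfl⟩
    split_ifs at hpar <;> omega
  · refine ⟨x - 1, ?_, Or.inr (by omega)⟩
    split_ifs at hpar <;> omega

theorem isGaleFacet_sdiff_of_isGaleTriple {n a b c : ℕ} (habc : IsGaleTriple a b c)
    (ha : 1 ≤ a) (hc : c ≤ n + 3) :
    IsGaleFacet n (n + 3) (Finset.Icc 1 (n + 3) \ {a, b, c}) := by
  have habc' := isGaleTriple_iff.mp habc
  refine ⟨?_, galeTripleTiling (n + 3) a b c, Finset.filter_subset _ _, ?_, ?_⟩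
  · rw [Finset.card_sdiff_of_subset, Nat.card_Icc,
      Finset.card_eq_three.mpr ⟨a, b, c, by omega, by omega, by omega, rfl⟩]
    · omega
    · intro x hx
      simp only [Finset.mem_insert, Finset.mem_singleton] at hx
      simp only [Finset.mem_Icc]
      omega
  · intro j hj j' hj' hne
    rw [mem_galeTripleTiling] at hj hj'
    rw [Finset.disjoint_left]
    intro x hx hx'
    rw [mem_galeInterval] at hx hx'
    omega
  · ext x
    simp only [Finset.mem_sdiff, Finset.mem_Icc, Finset.mem_insert, Finset.mem_singleton,
      Finset.mem_biUnion, mem_galeInterval]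
    constructor
    · rintro ⟨hx, hxabc⟩
      obtain ⟨j, hj, hxj⟩ := exists_mem_galeTripleTiling habc hx.1 hx.2 (by omega) (by omega)
        (by omega)
      exact ⟨j, hj, hxj, hx⟩
    · rintro ⟨j, hj, hxj, hx⟩
      rw [mem_galeTripleTiling] at hj
      omega

/-- `M` with its columns `1, …, m` reindexed by `Fin m` (column `j` is column `j + 1` of `M`). -/
def charMatrix (n m : ℕ) (M : Fin n → ℕ → ZMod 2) : Matrix (Fin n) (Fin m) (ZMod 2) :=
  Matrix.of fun p j => M p (j + 1)

theorem IsRealCharMat.eq_zero_of_mulVec_eq_zero {n m : ℕ} {M : Fin n → ℕ → ZMod 2}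
    (hM : IsRealCharMat n m M) {S : Finset (Fin m)}
    (hS : IsGaleFacet n m (S.image fun j : Fin m => (j : ℕ) + 1)) {w : Fin m → ZMod 2}
    (hw : charMatrix n m M *ᵥ w = 0) (hwS : ∀ j ∉ S, w j = 0) : w = 0 := by
  have hshift : Function.Injective fun j : Fin m => (j : ℕ) + 1 :=
    fun i j h => Fin.ext (by simpa using h)
  have hcard : S.card = n := by rw [← hS.1, Finset.card_image_of_injective _ hshift]
  let e := S.orderEmbOfFin hcard
  have hcols : Finset.image (fun q => (e q : ℕ) + 1) Finset.univ =
      S.image fun j : Fin m => (j : ℕ) + 1 := by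
    rw [← Finset.image_orderEmbOfFin_univ S hcard, Finset.image_image]
    rfl
  refine Matrix.eq_zero_of_mulVec_eq_zero_of_det_submatrix_ne_zero (A := charMatrix n m M)
    e.injective (hM _ (hshift.comp e.injective) (hcols ▸ hS)) hw fun j hj => hwS j ?_
  rwa [Finset.range_orderEmbOfFin] at hj

theorem IsRealCharMat.eq_zero_of_isGaleTriple {n : ℕ} {M : Fin n → ℕ → ZMod 2}
    (hM : IsRealCharMat n (n + 3) M) {a b c : Fin (n + 3)} (habc : IsGaleTriple a b c)
    {w : Fin (n + 3) → ZMod 2} (hw : charMatrix n (n + 3) M *ᵥ w = 0)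
    (hwabc : ∀ t ∈ ({a, b, c} : Finset (Fin (n + 3))), w t = 0) : w = 0 := by
  have himage : (({a, b, c}ᶜ : Finset (Fin (n + 3))).image fun j : Fin (n + 3) => (j : ℕ) + 1) =
      Finset.Icc 1 (n + 3) \ {(a : ℕ) + 1, (b : ℕ) + 1, (c : ℕ) + 1} := by
    ext x
    simp only [Finset.mem_image, Finset.mem_compl, Finset.mem_insert, Finset.mem_singleton,
      Finset.mem_sdiff, Finset.mem_Icc, Fin.ext_iff]
    constructor
    · rintro ⟨j, hj, rfl⟩
      omega
    · intro hx
      exact ⟨⟨x - 1, by omega⟩, by simp only; omega, by simp only; omega⟩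
  refine hM.eq_zero_of_mulVec_eq_zero (S := {a, b, c}ᶜ) ?_ hw
    fun t ht => hwabc t (by simpa [or_iff_not_imp_left] using ht)
  rw [himage]
  refine isGaleFacet_sdiff_of_isGaleTriple ?_ (by omega) (by omega)
  rw [isGaleTriple_iff] at habc ⊢
  omega

section RealCharMat

variable {n : ℕ} {M : Fin n → ℕ → ZMod 2}

theorem IsRealCharMat.finrank_ker_charMatrix (hM : IsRealCharMat n (n + 3) M) :
    finrank (ZMod 2) (LinearMap.ker (charMatrix n (n + 3) M).mulVecLin) = 3 := by
  refine le_antisymm ?_ ?_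
  · refine (Submodule.finrank_le_card_of_forall_eq_zero _ fun w hw =>
      hM.eq_zero_of_isGaleTriple (a := ⟨0, by omega⟩) (b := ⟨1, by omega⟩) (c := ⟨2, by omega⟩)
        (isGaleTriple_iff.mpr (by simp)) hw).trans Finset.card_le_three
  · have := (charMatrix n (n + 3) M).card_le_card_add_finrank_ker
    simp only [Fintype.card_fin] at this
    omega

theorem IsRealCharMat.exists_mem_ker_apply_ne (hM : IsRealCharMat n (n + 3) M) {k : ℕ}
    (hk : Odd k) (hkn : k ≤ n + 3) {p q : Fin (n + 3)} (hpq : p ≠ q) (hp : (p : ℕ) < k)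
    (hq : (q : ℕ) < k) : ∃ w ∈ LinearMap.ker (charMatrix n (n + 3) M).mulVecLin, w p ≠ w q := by
  wlog hlt : p < q generalizing p q
  · obtain ⟨w, hw, hne⟩ := this hpq.symm hq hp (lt_of_le_of_ne (not_lt.mp hlt) hpq.symm)
    exact ⟨w, hw, hne.symm⟩
  obtain ⟨a, b, c, habc, hpT, hqT⟩ := exists_isGaleTriple_mem_of_lt hk hkn hlt hq
  exact Submodule.exists_apply_ne_apply _
    (Finset.card_le_three.trans hM.finrank_ker_charMatrix.ge)
    (fun w hw => hM.eq_zero_of_isGaleTriple habc hw) hpT hqT hpq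

end RealCharMat

/-- There exists no real characteristic matrix on `Cⁿ(n+3)*` for `n ≥ 6`. -/
theorem stmt_8 (n : ℕ) (hn : 6 ≤ n) :
    ¬ ∃ M : Fin n → ℕ → ZMod 2, IsRealCharMat n (n + 3) M := by
  rintro ⟨M, hM⟩
  have h9 : 9 ≤ n + 3 := by omega
  have hcard := Submodule.card_le_pow_finrank_of_separating _ (Fin.castLE h9)
    fun p q hpq => hM.exists_mem_ker_apply_ne (by decide) h9
      ((Fin.castLE_injective h9).ne hpq) p.2 q.2
  rw [hM.finrank_ker_charMatrix] at hcard
  simp at hcard
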